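/- For m = 3: a word over Hanoi automaton states is called a one-letter word if all its states lie in {e, s} for a single non-identity state s. If w₁ and w₂ are one-letter words (possibly for different states s), then for every letter x, the section (w₁w₂)|_x is a one-letter word. -/

import Mathlib

/-- States of the Hanoi automaton: the identity state `e` and a state `a i j`
for each transposition `(i j)`. -/
inductive HState where
  | e : HState
  | a : ℕ → ℕ → HState
deriving DecidableEq

/-- Output function: `a i j` swaps the letters `i` and `j`. -/
def HState.out : HState → ℕ → ℕ
  | .e, x => x
  | .a i j, x => if x = i then j else if x = j then i else x

/-- Transition (section) function: `a i j` goes to `e` on letters `i`, `j`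
and stays put otherwise. -/
def HState.sec : HState → ℕ → HState
  | .e, _ => .e
  | .a i j, x => if x = i ∨ x = j then .e else .a i j

/-- Action of a word of states on a letter: `(s₁⋯sₙ)(x) = s₁(s₂(⋯sₙ(x)))`. -/
def wordOut : List HState → ℕ → ℕ
  | [], x => x
  | s :: w, x => s.out (wordOut w x)

/-- Section of a word of states at a letter: `s'ᵢ = sᵢ|_{(sᵢ₊₁⋯sₙ)(x)}`. -/
def wordSec : List HState → ℕ → List HState
  | [], _ => []
  | s :: w, x => s.sec (wordOut w x) :: wordSec w x

/-- Action of a word of states on a word of letters. -/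
def wordAct : List HState → List ℕ → List ℕ
  | _, [] => []
  | w, x :: v => wordOut w x :: wordAct (wordSec w x) v

/-- Section of a word of states at a word of letters. -/
def wordSecW : List HState → List ℕ → List HState
  | w, [] => w
  | w, x :: v => wordSecW (wordSec w x) v

/-- A state of the Hanoi automaton `H_m`: either `e` or `a i j` with
`1 ≤ i < j ≤ m` (one state per transposition of `{1,…,m}`). -/
def IsHanoiState (m : ℕ) (s : HState) : Prop :=
  s = HState.e ∨ ∃ i j, s = HState.a i j ∧ 1 ≤ i ∧ i < j ∧ j ≤ m

/-- A one-letter word: all states lie in `{e, s}` for a single non-identity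
state `s` of `H_m`. -/
def OneLetterWord (m : ℕ) (w : List HState) : Prop :=
  ∃ s : HState, IsHanoiState m s ∧ s ≠ HState.e ∧ ∀ t ∈ w, t = HState.e ∨ t = s

namespace HState

lemma sec_mem (s : HState) (x : ℕ) : s.sec x ∈ [e, s] := by
  cases s with
  | e => simp [sec]
  | a i j => simp only [sec]; split_ifs <;> simp

lemma out_a_of_ne {k l x : ℕ} (hk : x ≠ k) (hl : x ≠ l) : (a k l).out x = x := by
  simp [out, hk, hl]

lemma out_a_mem_pair {k l x : ℕ} (hx : x = k ∨ x = l) :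
    (a k l).out x = k ∨ (a k l).out x = l := by
  rcases hx with rfl | rfl <;> simp [out]

lemma sec_a_of_mem_pair {k l x : ℕ} (hx : x = k ∨ x = l) : (a k l).sec x = e := by
  simp [sec, hx]

end HState

open HState

lemma wordOut_append (w₁ w₂ : List HState) (x : ℕ) :
    wordOut (w₁ ++ w₂) x = wordOut w₁ (wordOut w₂ x) := by
  induction w₁ with
  | nil => rfl
  | cons s w ih => simp [wordOut, ih]

lemma wordSec_append (w₁ w₂ : List HState) (x : ℕ) :
    wordSec (w₁ ++ w₂) x = wordSec w₁ (wordOut w₂ x) ++ wordSec w₂ x := by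
  induction w₁ with
  | nil => rfl
  | cons s w ih => simp [wordSec, ih, wordOut_append]

lemma wordSec_subset {s : HState} {w : List HState} (hw : w ⊆ [e, s]) (x : ℕ) :
    wordSec w x ⊆ [e, s] := by
  induction w with
  | nil => simp [wordSec]
  | cons t w ih =>
    obtain ⟨ht, htl⟩ := List.cons_subset.1 hw
    rcases List.mem_pair.1 ht with rfl | rfl
    · exact List.cons_subset.2 ⟨by simp [sec], ih htl⟩
    · exact List.cons_subset.2 ⟨sec_mem _ _, ih htl⟩

lemma wordOut_eq_self {s : HState} {w : List HState} {x : ℕ} (hw : w ⊆ [e, s])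
    (hs : s.out x = x) : wordOut w x = x := by
  induction w with
  | nil => rfl
  | cons t w ih =>
    obtain ⟨ht, htl⟩ := List.cons_subset.1 hw
    rcases List.mem_pair.1 ht with rfl | rfl
    · simp [wordOut, out, ih htl]
    · simp [wordOut, ih htl, hs]

lemma wordOut_mem_pair {k l x : ℕ} {w : List HState} (hw : w ⊆ [e, a k l])
    (hx : x = k ∨ x = l) : wordOut w x = k ∨ wordOut w x = l := by
  induction w with
  | nil => exact hx
  | cons t w ih =>
    obtain ⟨ht, htl⟩ := List.cons_subset.1 hw
    rcases List.mem_pair.1 ht with rfl | rfl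
    · simpa [wordOut, out] using ih htl
    · exact out_a_mem_pair (ih htl)

/-- Once the input letter is moved by `a k l`, it stays in `{k, l}`, where `a k l` dies. -/
lemma wordSec_subset_e {k l x : ℕ} {w : List HState} (hw : w ⊆ [e, a k l])
    (hx : x = k ∨ x = l) : wordSec w x ⊆ [e] := by
  induction w with
  | nil => simp [wordSec]
  | cons t w ih =>
    obtain ⟨ht, htl⟩ := List.cons_subset.1 hw
    refine List.cons_subset.2 ⟨?_, ih htl⟩
    rcases List.mem_pair.1 ht with rfl | rfl
    · simp [sec]
    · simp [sec_a_of_mem_pair (wordOut_mem_pair htl hx)]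

lemma oneLetterWord_iff {m : ℕ} {w : List HState} :
    OneLetterWord m w ↔ ∃ i j, 1 ≤ i ∧ i < j ∧ j ≤ m ∧ w ⊆ [e, a i j] := by
  constructor
  · rintro ⟨s, rfl | ⟨i, j, rfl, hi, hij, hj⟩, hse, hw⟩
    · exact absurd rfl hse
    · exact ⟨i, j, hi, hij, hj, fun t ht => by simpa using hw t ht⟩
  · rintro ⟨i, j, hi, hij, hj, hw⟩
    exact ⟨a i j, Or.inr ⟨i, j, rfl, hi, hij, hj⟩, nofun, fun t ht => by simpa using hw ht⟩

/-- For `m = 3`: the section of a product of two one-letter words at any letter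
is a one-letter word. -/
theorem section_of_two_one_letter_words (w₁ w₂ : List HState)
    (h₁ : OneLetterWord 3 w₁) (h₂ : OneLetterWord 3 w₂)
    (x : ℕ) (hx : x ∈ Finset.Icc 1 3) :
    OneLetterWord 3 (wordSec (w₁ ++ w₂) x) := by
  obtain ⟨i, j, hi, hij, hj, hw₁⟩ := oneLetterWord_iff.1 h₁
  obtain ⟨k, l, hk, hkl, hl, hw₂⟩ := oneLetterWord_iff.1 h₂
  have he {s : HState} : [e] ⊆ [e, s] := List.cons_subset_cons _ (List.nil_subset _)
  rw [wordSec_append, oneLetterWord_iff]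
  by_cases hxkl : x = k ∨ x = l
  · exact ⟨i, j, hi, hij, hj,
      List.append_subset.2
        ⟨wordSec_subset hw₁ _, List.Subset.trans (wordSec_subset_e hw₂ hxkl) he⟩⟩
  push Not at hxkl
  rw [wordOut_eq_self hw₂ (out_a_of_ne hxkl.1 hxkl.2)]
  by_cases hxij : x = i ∨ x = j
  · exact ⟨k, l, hk, hkl, hl,
      List.append_subset.2
        ⟨List.Subset.trans (wordSec_subset_e hw₁ hxij) he, wordSec_subset hw₂ _⟩⟩
  -- Over three letters, a letter outside both `{i, j}` and `{k, l}` forces `{i, j} = {k, l}`.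
  obtain ⟨rfl, rfl⟩ : i = k ∧ j = l := by
    push Not at hxij
    rw [Finset.mem_Icc] at hx
    omega
  exact ⟨i, j, hi, hij, hj,
    List.append_subset.2 ⟨wordSec_subset hw₁ _, wordSec_subset hw₂ _⟩⟩
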